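/- arXiv:1504.05428 — 4 statements merged into one kernel-verified Lean document; each statement's English description precedes it below -/
import Mathlib

section
/- For a polynomial C with dual quaternion coefficients (indeterminate commuting with coefficients), the norm polynomial C·conj(C) has all coefficients in the subalgebra of dual numbers (real span of 1 and ε). -/
open Polynomial TrivSqZeroExt
open scoped Quaternion

/-- Conjugation of a dual quaternion `h = p + εq`: `conj h = conj p + ε conj q`. -/
noncomputable def dconj (h : DualNumber ℍ[ℝ]) : DualNumber ℍ[ℝ] :=
  inl (star h.fst) + inl (star h.snd) * DualNumber.eps

/-- Coefficientwise conjugation of a polynomial with dual quaternion coefficients. -/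
noncomputable def dconjPoly (C : (DualNumber ℍ[ℝ])[X]) : (DualNumber ℍ[ℝ])[X] :=
  ∑ i ∈ C.support, Polynomial.C (dconj (C.coeff i)) * Polynomial.X ^ i

/-!
Since `t` is central, coefficientwise conjugation reverses products in `DH[t]`, so `C * conj C`
is self-conjugate; a self-conjugate dual quaternion `p + εq` has `p` and `q` real.
-/

theorem Polynomial.isSelfAdjoint_coeff_mul_of_coeff_eq_star {R : Type*} [Semiring R] [StarRing R]
    {p q : R[X]} (hq : ∀ i, q.coeff i = star (p.coeff i)) (n : ℕ) :
    IsSelfAdjoint ((p * q).coeff n) := by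
  rw [IsSelfAdjoint, coeff_mul, star_sum]
  simp only [star_mul, hq, star_star]
  exact Finset.Nat.sum_antidiagonal_swap (f := fun ij => p.coeff ij.1 * star (p.coeff ij.2))

namespace DualNumber

variable {A : Type*} [Ring A] [StarRing A]

instance : StarRing (DualNumber A) where
  star x := inl (star x.fst) + inr (star x.snd)
  star_involutive x := by ext <;> simp
  star_mul x y := by ext <;> simp [add_comm]
  star_add x y := by ext <;> simp [add_add_add_comm]

@[simp] theorem fst_star (x : DualNumber A) : (star x).fst = star x.fst := by
  simp [star]

@[simp] theorem snd_star (x : DualNumber A) : (star x).snd = star x.snd := by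
  simp [star]

theorem eq_smul_one_add_smul_eps_of_isSelfAdjoint {x : DualNumber ℍ[ℝ]} (hx : IsSelfAdjoint x) :
    x = x.fst.re • (1 : DualNumber ℍ[ℝ]) + x.snd.re • eps := by
  have hfst : star x.fst = x.fst := by rw [← fst_star, hx.star_eq]
  have hsnd : star x.snd = x.snd := by rw [← snd_star, hx.star_eq]
  apply TrivSqZeroExt.ext
  · simpa [Algebra.smul_def, Quaternion.algebraMap_def] using Quaternion.star_eq_self.mp hfst
  · simpa [Algebra.smul_def, Quaternion.algebraMap_def] using Quaternion.star_eq_self.mp hsnd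

end DualNumber

theorem dconj_eq_star (h : DualNumber ℍ[ℝ]) : dconj h = star h := by
  ext <;> simp [dconj]

theorem coeff_dconjPoly (C : (DualNumber ℍ[ℝ])[X]) (i : ℕ) :
    (dconjPoly C).coeff i = star (C.coeff i) := by
  simp +contextual [dconjPoly, finsetSum_coeff, coeff_C_mul, coeff_X_pow, dconj_eq_star]

/-- All coefficients of the norm polynomial `C ⬝ conj C` of a dual quaternion
polynomial lie in the real span of `1` and `ε`, i.e. they are dual numbers. -/
theorem normPoly_coeff_dualNumber (C : (DualNumber ℍ[ℝ])[X]) :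
    ∀ n : ℕ, ∃ a b : ℝ,
      (C * dconjPoly C).coeff n = a • (1 : DualNumber ℍ[ℝ]) + b • DualNumber.eps :=
  fun n => ⟨_, _, DualNumber.eq_smul_one_add_smul_eps_of_isSelfAdjoint
    (isSelfAdjoint_coeff_mul_of_coeff_eq_star (coeff_dconjPoly C) n)⟩
end

section
/- Let C be a quaternion polynomial and M a monic quadratic real polynomial irreducible over ℝ that divides the real polynomial C·conj(C). Then M and C have a common left divisor of positive degree in ℍ[t]. -/
open Polynomial
open scoped Quaternion

/-!
Divide `C` on the left by `M`: `C = M Q + R` with `deg R < 2`. A real polynomial is central and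
self-conjugate, so `M` also divides `R · conj R`. If `R = 0`, `M` itself is the common divisor.
Otherwise `R · conj R` has degree `2 deg R`, which is at least `2` because `M` divides it and at
most `2` because `deg R ≤ 1`; hence `R · conj R` is `M` times a nonzero constant, and `R` is a
common left divisor of `M` and `C` of degree one.
-/

/-- Coefficientwise conjugation of a quaternion polynomial. -/
noncomputable def qconj (P : ℍ[ℝ][X]) : ℍ[ℝ][X] :=
  ∑ i ∈ P.support, Polynomial.C (star (P.coeff i)) * Polynomial.X ^ i

theorem Polynomial.commute_map_algebraMap {R A : Type*} [CommSemiring R] [Semiring A]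
    [Algebra R A] (M : R[X]) (p : A[X]) : Commute (M.map (algebraMap R A)) p := by
  induction M using Polynomial.induction_on' with
  | add M N hM hN => rw [Polynomial.map_add]; exact hM.add_left hN
  | monomial n a =>
    rw [map_monomial, ← C_mul_X_pow_eq_monomial, ← algebraMap_apply]
    exact (Algebra.commute_algebraMap_left a p).mul_left (commute_X_pow p n)

theorem Polynomial.dvd_of_dvd_of_natDegree_le {D : Type*} [DivisionRing D] {P A : D[X]}
    (hA : A ≠ 0) (hPA : P ∣ A) (hdeg : A.natDegree ≤ P.natDegree) : A ∣ P := by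
  obtain ⟨W, rfl⟩ := hPA
  obtain ⟨hP, hW⟩ := mul_ne_zero_iff.mp hA
  rw [natDegree_mul hP hW] at hdeg
  have hWC : W = C (W.coeff 0) := eq_C_of_natDegree_eq_zero (by omega)
  have hw : W.coeff 0 ≠ 0 := fun h => hW (by rw [hWC, h, C_0])
  refine ⟨C (W.coeff 0)⁻¹, ?_⟩
  rw [mul_assoc, hWC, ← C_mul, coeff_C_zero, mul_inv_cancel₀ hw, C_1, mul_one]

theorem coeff_qconj (P : ℍ[ℝ][X]) (n : ℕ) : (qconj P).coeff n = star (P.coeff n) := by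
  rw [qconj, finsetSum_coeff]
  simp only [coeff_C_mul_X_pow]
  rw [Finset.sum_ite_eq]
  split_ifs with h
  · rfl
  · rw [notMem_support_iff.mp h, star_zero]

theorem support_qconj (P : ℍ[ℝ][X]) : (qconj P).support = P.support := by
  ext n : 1
  simp [coeff_qconj]

theorem natDegree_qconj (P : ℍ[ℝ][X]) : (qconj P).natDegree = P.natDegree := by
  simp only [natDegree, degree, support_qconj]

theorem qconj_ne_zero {P : ℍ[ℝ][X]} (hP : P ≠ 0) : qconj P ≠ 0 := by
  rwa [ne_eq, ← support_eq_empty, support_qconj, support_eq_empty]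

theorem qconj_add (P Q : ℍ[ℝ][X]) : qconj (P + Q) = qconj P + qconj Q := by
  ext n : 1
  simp [coeff_qconj]

theorem qconj_mul (P Q : ℍ[ℝ][X]) : qconj (P * Q) = qconj Q * qconj P := by
  ext n : 1
  rw [coeff_qconj, coeff_mul, coeff_mul, star_sum,
    ← Finset.Nat.sum_antidiagonal_swap]
  simp [coeff_qconj]

theorem qconj_map_algebraMap (M : ℝ[X]) :
    qconj (M.map (algebraMap ℝ ℍ[ℝ])) = M.map (algebraMap ℝ ℍ[ℝ]) := by
  ext n : 1
  simp [coeff_qconj, Quaternion.algebraMap_def]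

theorem dvd_mul_qconj_of_dvd_mul_qconj_mul_add (M : ℝ[X]) (Q R : ℍ[ℝ][X])
    (h : M.map (algebraMap ℝ ℍ[ℝ]) ∣
      (M.map (algebraMap ℝ ℍ[ℝ]) * Q + R) * qconj (M.map (algebraMap ℝ ℍ[ℝ]) * Q + R)) :
    M.map (algebraMap ℝ ℍ[ℝ]) ∣ R * qconj R := by
  set Mf := M.map (algebraMap ℝ ℍ[ℝ])
  have hexpand : (Mf * Q + R) * qconj (Mf * Q + R)
      = Mf * (Q * qconj (Mf * Q + R)) + R * qconj Q * Mf + R * qconj R := by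
    rw [qconj_add, qconj_mul, qconj_map_algebraMap]
    noncomm_ring
  rw [hexpand, ← (commute_map_algebraMap M _).eq] at h
  exact (dvd_add_right (dvd_add (dvd_mul_right _ _) (dvd_mul_right _ _))).mp h

theorem natDegree_pos_and_dvd_of_dvd_mul_qconj {P R : ℍ[ℝ][X]} (hR : R ≠ 0)
    (hP : P.natDegree = 2) (hR1 : R.natDegree < 2) (hPR : P ∣ R * qconj R) :
    0 < R.natDegree ∧ R ∣ P := by
  have hRR0 : R * qconj R ≠ 0 := mul_ne_zero hR (qconj_ne_zero hR)
  have hnorm_deg : (R * qconj R).natDegree = 2 * R.natDegree := by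
    rw [natDegree_mul hR (qconj_ne_zero hR), natDegree_qconj, two_mul]
  have hle := natDegree_le_of_dvd hPR hRR0
  exact ⟨by omega,
    (dvd_mul_right R _).trans (dvd_of_dvd_of_natDegree_le hRR0 hPR (by omega))⟩

theorem left_gcd_of_irreducible_quadratic_dvd_norm_general (C : ℍ[ℝ][X]) (M : ℝ[X])
    (hM : M.Monic) (hdeg : M.degree = 2)
    (hdvd : M.map (algebraMap ℝ ℍ[ℝ]) ∣ C * qconj C) :
    ∃ L : ℍ[ℝ][X], 0 < L.degree ∧ L ∣ M.map (algebraMap ℝ ℍ[ℝ]) ∧ L ∣ C := by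
  set Mf := M.map (algebraMap ℝ ℍ[ℝ])
  have hMf : Mf.Monic := hM.map _
  have hMf2 : Mf.natDegree = 2 := by
    rw [natDegree_map_eq_of_injective (algebraMap ℝ ℍ[ℝ]).injective,
      natDegree_eq_of_degree_eq_some hdeg]
  have hCR := modByMonic_add_div C Mf
  set R := C %ₘ Mf
  by_cases hR : R = 0
  · exact ⟨Mf, by rw [degree_eq_natDegree hMf.ne_zero, hMf2]; norm_num, dvd_rfl,
      (modByMonic_eq_zero_iff_dvd hMf).mp hR⟩
  have hRR : Mf ∣ R * qconj R :=
    dvd_mul_qconj_of_dvd_mul_qconj_mul_add M (C /ₘ Mf) R (by rwa [add_comm, hCR])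
  have hR1 : R.natDegree < 2 := hMf2 ▸ natDegree_lt_natDegree hR (degree_modByMonic_lt C hMf)
  obtain ⟨hpos, hRM⟩ := natDegree_pos_and_dvd_of_dvd_mul_qconj hR hMf2 hR1 hRR
  refine ⟨R, natDegree_pos_iff_degree_pos.mp hpos, hRM, ?_⟩
  rw [← hCR]
  exact dvd_add dvd_rfl (hRM.mul_right _)

/-- If a monic quadratic real polynomial `M`, irreducible over ℝ, divides
`C ⬝ conj C`, then `M` and `C` have a common left divisor of positive degree. -/
theorem left_gcd_of_irreducible_quadratic_dvd_norm (C : ℍ[ℝ][X]) (M : ℝ[X])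
    (hM : M.Monic) (hdeg : M.degree = 2) (hirr : Irreducible M)
    (hdvd : M.map (algebraMap ℝ ℍ[ℝ]) ∣ C * qconj C) :
    ∃ L : ℍ[ℝ][X], 0 < L.degree ∧ L ∣ M.map (algebraMap ℝ ℍ[ℝ]) ∧ L ∣ C :=
  left_gcd_of_irreducible_quadratic_dvd_norm_general C M hM hdeg hdvd
end

section
/- Let A, B be quaternion polynomials and let M be a monic quadratic real polynomial irreducible over ℝ dividing the product A·B. Then either M divides A, or M divides B, or there exists a quaternion q with M = (t - q)(t - conj(q)) and quaternion polynomials A₁, B₁ such that A = A₁·(t - q) and B = (t - conj(q))·B₁. -/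
open Polynomial
open scoped Quaternion

/-!
Real polynomials are central in `ℍ[t]`, so we may replace `A` and `B` by their remainders modulo
`M`. If neither remainder vanishes, `M` divides their product and both have degree `< 2`; hence
they are linear, `a (t - q)` and `(t - p) b`, and comparing degrees and leading coefficients gives
`(t - q)(t - p) = M`. Centrality of `M` also gives `M = (t - p)(t - q)`, which lets `t - q` be split
off `A` on the right and `t - p` off `B` on the left. Finally `q + p` and `q p` are real, which
forces `p = conj q` unless `p` is real, and a real `p` would be a real root of `M`.
-/

theorem commute_of_commute_mul_left {M₀ : Type*} [MonoidWithZero M₀] [IsLeftCancelMulZero M₀]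
    {a b : M₀} (ha : a ≠ 0) (h : Commute (a * b) a) : Commute a b :=
  (mul_left_cancel₀ ha (by rw [← mul_assoc, h.eq])).symm

theorem dvd_mul_of_dvd_add_mul_mul_add_mul {R : Type*} [Ring R] {c a b x y : R}
    (hc : ∀ z, Commute c z) (h : c ∣ (a + c * x) * (b + c * y)) : c ∣ a * b := by
  have hac : a * (c * y) = c * (a * y) := by rw [← mul_assoc, ← (hc a).eq, mul_assoc]
  have hexpand : (a + c * x) * (b + c * y) = a * b + c * (x * (b + c * y) + a * y) := by
    rw [add_mul, mul_add a, hac]; noncomm_ring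
  rwa [hexpand, dvd_add_left (dvd_mul_right _ _)] at h

namespace Polynomial

theorem commute_map_algebraMap_s13 {R A : Type*} [CommSemiring R] [Semiring A] [Algebra R A]
    (M : R[X]) (P : A[X]) : Commute (M.map (algebraMap R A)) P := by
  induction M using Polynomial.induction_on' with
  | add p q hp hq => simpa only [Polynomial.map_add] using hp.add_left hq
  | monomial n r =>
    rw [map_monomial, ← C_mul_X_pow_eq_monomial, ← algebraMap_apply]
    exact (Algebra.commute_algebraMap_left r P).mul_left (commute_X_pow P n)

theorem add_eq_and_mul_eq_of_X_sub_C_mul_X_sub_C_eq_map {R A : Type*} [Ring R] [Ring A]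
    (f : R →+* A) {M : R[X]} {q p : A} (h : (X - C q) * (X - C p) = M.map f) :
    q + p = f (-M.coeff 1) ∧ q * p = f (M.coeff 0) := by
  have h1 : -q - p = f (M.coeff 1) := by
    simpa [coeff_mul_X_sub_C] using congrArg (coeff · (0 + 1)) h
  have h0 : q * p = f (M.coeff 0) := by simpa using congrArg (coeff · 0) h
  refine ⟨?_, h0⟩
  rw [map_neg, ← h1]
  abel

theorem isRoot_of_map_eq_mul_X_sub_C {R A : Type*} [Semiring R] [Ring A] {f : R →+* A}
    (hf : Function.Injective f) {M : R[X]} {N : A[X]} {r : R} (h : M.map f = N * (X - C (f r))) :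
    M.IsRoot r :=
  hf <| by rw [← eval₂_at_apply, ← eval_map, h, eval_mul_X_sub_C, map_zero]

section DivisionRing

variable {K : Type*} [DivisionRing K]

theorem exists_eq_C_mul_X_sub_C {P : K[X]} (h : P.natDegree = 1) :
    ∃ a q, P = C a * (X - C q) := by
  have ha : P.coeff 1 ≠ 0 := by
    rw [← h]; exact leadingCoeff_ne_zero.mpr (ne_zero_of_natDegree_gt (h ▸ one_pos))
  refine ⟨P.coeff 1, -((P.coeff 1)⁻¹ * P.coeff 0), ?_⟩
  rw [mul_sub, ← C_mul, mul_neg, mul_inv_cancel_left₀ ha, C_neg, sub_neg_eq_add]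
  exact eq_X_add_C_of_natDegree_le_one h.le

theorem exists_eq_X_sub_C_mul_C {P : K[X]} (h : P.natDegree = 1) :
    ∃ p b, P = (X - C p) * C b := by
  have hb : P.coeff 1 ≠ 0 := by
    rw [← h]; exact leadingCoeff_ne_zero.mpr (ne_zero_of_natDegree_gt (h ▸ one_pos))
  refine ⟨-(P.coeff 0 * (P.coeff 1)⁻¹), P.coeff 1, ?_⟩
  rw [sub_mul, X_mul_C, ← C_mul, neg_mul, inv_mul_cancel_right₀ hb, C_neg, sub_neg_eq_add]
  exact eq_X_add_C_of_natDegree_le_one h.le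

variable {M : K[X]}

theorem exists_eq_X_sub_C_mul_X_sub_C_of_dvd_mul (hM : M.Monic) (hdeg : M.natDegree = 2)
    (hc : ∀ P, Commute M P) {P Q : K[X]} (hP : P ≠ 0) (hQ : Q ≠ 0) (hPdeg : P.natDegree < 2)
    (hQdeg : Q.natDegree < 2) (h : M ∣ P * Q) :
    ∃ a q p b, P = C a * (X - C q) ∧ Q = (X - C p) * C b ∧ M = (X - C q) * (X - C p) := by
  have hsum := natDegree_le_of_dvd h (mul_ne_zero hP hQ)
  rw [natDegree_mul hP hQ, hdeg] at hsum
  obtain ⟨a, q, rfl⟩ := exists_eq_C_mul_X_sub_C (P := P) (by omega)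
  obtain ⟨p, b, rfl⟩ := exists_eq_X_sub_C_mul_C (P := Q) (by omega)
  have ha : a ≠ 0 := by rintro rfl; simp at hP
  have hb : b ≠ 0 := by rintro rfl; simp at hQ
  refine ⟨a, q, p, b, rfl, rfl, ?_⟩
  have hdvd : M ∣ (X - C q) * (X - C p) := by
    obtain ⟨S, hS⟩ := h
    refine ⟨C a⁻¹ * S * C b⁻¹, ?_⟩
    calc (X - C q) * (X - C p)
        = C a⁻¹ * (C a * (X - C q) * ((X - C p) * C b)) * C b⁻¹ := by
          simp only [← mul_assoc, ← C_mul, inv_mul_cancel₀ ha, C_1, one_mul]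
          rw [mul_assoc _ (C b), ← C_mul, mul_inv_cancel₀ hb, C_1, mul_one]
      _ = M * (C a⁻¹ * S * C b⁻¹) := by
          rw [hS, ← mul_assoc, ← (hc _).eq, mul_assoc, mul_assoc, mul_assoc]
  refine (eq_of_monic_of_dvd_of_natDegree_le hM ((monic_X_sub_C q).mul (monic_X_sub_C p)) hdvd
    ?_).symm
  rw [(monic_X_sub_C q).natDegree_mul (monic_X_sub_C p), natDegree_X_sub_C, natDegree_X_sub_C,
    hdeg]

theorem dvd_or_dvd_or_exists_X_sub_C_of_dvd_mul (hM : M.Monic) (hdeg : M.natDegree = 2)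
    (hc : ∀ P, Commute M P) {A B : K[X]} (h : M ∣ A * B) :
    M ∣ A ∨ M ∣ B ∨ ∃ q p A₁ B₁,
      M = (X - C q) * (X - C p) ∧ A = A₁ * (X - C q) ∧ B = (X - C p) * B₁ := by
  rcases eq_or_ne (A %ₘ M) 0 with hA | hA
  · exact Or.inl ((modByMonic_eq_zero_iff_dvd hM).mp hA)
  rcases eq_or_ne (B %ₘ M) 0 with hB | hB
  · exact Or.inr (Or.inl ((modByMonic_eq_zero_iff_dvd hM).mp hB))
  have hM1 : M ≠ 1 := by rintro rfl; simp at hdeg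
  have hrem : M ∣ A %ₘ M * (B %ₘ M) :=
    dvd_mul_of_dvd_add_mul_mul_add_mul hc
      (by rwa [modByMonic_add_div A M, modByMonic_add_div B M])
  have hAdeg : (A %ₘ M).natDegree < 2 := hdeg ▸ natDegree_modByMonic_lt A hM hM1
  have hBdeg : (B %ₘ M).natDegree < 2 := hdeg ▸ natDegree_modByMonic_lt B hM hM1
  obtain ⟨a, q, p, b, hA', hB', hMqp⟩ :=
    exists_eq_X_sub_C_mul_X_sub_C_of_dvd_mul hM hdeg hc hA hB hAdeg hBdeg hrem
  have hMpq : M = (X - C p) * (X - C q) := by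
    rw [hMqp]
    exact (commute_of_commute_mul_left (X_sub_C_ne_zero q) (hMqp ▸ hc _)).eq
  refine Or.inr (Or.inr
    ⟨q, p, C a + A /ₘ M * (X - C p), C b + (X - C q) * (B /ₘ M), hMqp, ?_, ?_⟩)
  · calc A = A %ₘ M + M * (A /ₘ M) := (modByMonic_add_div A M).symm
      _ = _ := by rw [hA', (hc _).eq, hMpq]; noncomm_ring
  · calc B = B %ₘ M + M * (B /ₘ M) := (modByMonic_add_div B M).symm
      _ = _ := by rw [hB', hMpq]; noncomm_ring

end DivisionRing

end Polynomial

namespace Quaternion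

theorem eq_star_or_im_eq_zero_of_add_eq_coe_of_mul_eq_coe {R : Type*} [Field R]
    {q p : ℍ[R]} {r s : R} (hsum : q + p = r) (hprod : q * p = s) : p = star q ∨ p.im = 0 := by
  obtain rfl : p = r - q := eq_sub_of_add_eq' hsum
  -- `q (r - q) = (r - 2 re q) q + normSq q`, because `q² = 2 re q · q - normSq q`
  have him : (r - 2 * q.re) • q.im = 0 := by
    rw [← im_coe s, ← hprod]
    ext <;> simp <;> ring
  rcases smul_eq_zero.mp him with hr | hq
  · left
    rw [star_eq_two_re_sub, ← sub_eq_zero.mp hr]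
  · right
    simp [hq]

end Quaternion

/-- Lemma 1 of the paper: if a monic quadratic irreducible real polynomial `M`
divides a product `A ⬝ B` of quaternion polynomials, then `M ∣ A`, or `M ∣ B`, or
there is a quaternion `q` with `M = (t - q)(t - conj q)`, `A = A₁ (t - q)` and
`B = (t - conj q) B₁`. -/
theorem irreducible_quadratic_dvd_mul (A B : ℍ[ℝ][X]) (M : ℝ[X])
    (hM : M.Monic) (hdeg : M.degree = 2) (hirr : Irreducible M)
    (hdvd : M.map (algebraMap ℝ ℍ[ℝ]) ∣ A * B) :
    M.map (algebraMap ℝ ℍ[ℝ]) ∣ A ∨ M.map (algebraMap ℝ ℍ[ℝ]) ∣ B ∨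
      ∃ q : ℍ[ℝ], ∃ A₁ B₁ : ℍ[ℝ][X],
        M.map (algebraMap ℝ ℍ[ℝ]) =
          (Polynomial.X - Polynomial.C q) * (Polynomial.X - Polynomial.C (star q)) ∧
        A = A₁ * (Polynomial.X - Polynomial.C q) ∧
        B = (Polynomial.X - Polynomial.C (star q)) * B₁ := by
  have hdeg' : (M.map (algebraMap ℝ ℍ[ℝ])).natDegree = 2 := by
    rw [natDegree_map, natDegree_eq_of_degree_eq_some hdeg]
  obtain hA | hB | ⟨q, p, A₁, B₁, hqp, hA, hB⟩ :=
    dvd_or_dvd_or_exists_X_sub_C_of_dvd_mul (hM.map _) hdeg' (commute_map_algebraMap_s13 M) hdvd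
  · exact Or.inl hA
  · exact Or.inr (Or.inl hB)
  obtain ⟨hsum, hprod⟩ := add_eq_and_mul_eq_of_X_sub_C_mul_X_sub_C_eq_map _ hqp.symm
  obtain rfl | hp := Quaternion.eq_star_or_im_eq_zero_of_add_eq_coe_of_mul_eq_coe hsum hprod
  · exact Or.inr (Or.inr ⟨q, A₁, B₁, hqp, hA, hB⟩)
  · have hp_real : algebraMap ℝ ℍ[ℝ] p.re = p := by simpa [hp] using Quaternion.re_add_im p
    have hroot : M.IsRoot p.re :=
      isRoot_of_map_eq_mul_X_sub_C (algebraMap ℝ ℍ[ℝ]).injective (by rwa [hp_real])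
    exact absurd (degree_eq_one_of_irreducible_of_root hirr hroot) (by rw [hdeg]; decide)
end

section
/- Let x₀, x₁, x₂, x₃ ∈ ℝ[t] be coprime (gcd of all four has degree zero). Then deg gcd(x₀, x₁² + x₂² + x₃²) is even. -/
open Polynomial

/-!
A real root `r` of `gcd(x₀, x₁² + x₂² + x₃²)` would be a common root of all four `xᵢ`, since a
vanishing sum of real squares has vanishing terms; then `X - r` would divide their gcd, which is a
unit. So this gcd has no real roots, and a real polynomial without real roots has even degree,
because its irreducible factors all have degree two.
-/

theorem Irreducible.natDegree_eq_two_of_forall_not_isRoot {p : ℝ[X]} (hp : Irreducible p)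
    (hroot : ∀ r, ¬ p.IsRoot r) : p.natDegree = 2 := by
  have hpos : 0 < p.natDegree := hp.natDegree_pos
  have hne_one : p.natDegree ≠ 1 := fun h ↦ by
    obtain ⟨r, hr⟩ := exists_root_of_degree_eq_one (degree_eq_iff_natDegree_eq hp.ne_zero |>.2 h)
    exact hroot r hr
  have := hp.natDegree_le_two
  omega

theorem Polynomial.even_natDegree_of_forall_not_isRoot {p : ℝ[X]} (hroot : ∀ r, ¬ p.IsRoot r) :
    Even p.natDegree := by
  induction p using WfDvdMonoid.induction_on_irreducible with
  | zero => simp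
  | unit u hu => simp [natDegree_eq_zero_of_isUnit hu]
  | mul a q ha hq ih =>
    have hq_root : ∀ r, ¬ q.IsRoot r := fun r h ↦ hroot r (by simp [h.eq_zero])
    have ha_root : ∀ r, ¬ a.IsRoot r := fun r h ↦ hroot r (by simp [h.eq_zero])
    rw [natDegree_mul hq.ne_zero ha, hq.natDegree_eq_two_of_forall_not_isRoot hq_root]
    exact even_two.add (ih ha_root)

theorem Polynomial.IsRoot.of_sq_add_sq_add_sq {K : Type*} [Field K] [LinearOrder K]
    [IsStrictOrderedRing K] {p q s : K[X]} {r : K} (h : (p ^ 2 + q ^ 2 + s ^ 2).IsRoot r) :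
    p.IsRoot r ∧ q.IsRoot r ∧ s.IsRoot r := by
  simp only [IsRoot.def, eval_add, eval_pow] at h ⊢
  refine ⟨?_, ?_, ?_⟩ <;>
    nlinarith [sq_nonneg (p.eval r), sq_nonneg (q.eval r), sq_nonneg (s.eval r)]

/-- If `x₀, x₁, x₂, x₃ ∈ ℝ[t]` are coprime, then
`deg gcd(x₀, x₁² + x₂² + x₃²)` is even (the circularity is an integer). -/
theorem circularity_is_integer (x₀ x₁ x₂ x₃ : ℝ[X])
    (hred : (gcd (gcd (gcd x₀ x₁) x₂) x₃).degree = 0) :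
    Even (gcd x₀ (x₁ ^ 2 + x₂ ^ 2 + x₃ ^ 2)).natDegree := by
  refine even_natDegree_of_forall_not_isRoot fun r hr ↦ ?_
  have hdvd : X - C r ∣ gcd x₀ (x₁ ^ 2 + x₂ ^ 2 + x₃ ^ 2) := dvd_iff_isRoot.2 hr
  have h₀ : x₀.IsRoot r := dvd_iff_isRoot.1 (hdvd.trans (gcd_dvd_left _ _))
  obtain ⟨h₁, h₂, h₃⟩ :=
    IsRoot.of_sq_add_sq_add_sq (dvd_iff_isRoot.1 (hdvd.trans (gcd_dvd_right _ _)))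
  have hgcd : X - C r ∣ gcd (gcd (gcd x₀ x₁) x₂) x₃ :=
    dvd_gcd (dvd_gcd (dvd_gcd (dvd_iff_isRoot.2 h₀) (dvd_iff_isRoot.2 h₁)) (dvd_iff_isRoot.2 h₂))
      (dvd_iff_isRoot.2 h₃)
  exact not_isUnit_X_sub_C r (isUnit_of_dvd_unit hgcd (isUnit_iff_degree_eq_zero.2 hred))
end
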